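/- Let a > b > 0 and set s' = sqrt((2*b² + a*b)/(2*a² + a*b)), α = s'*a, β = b, and δ = sqrt(α⁴ − α²β² + β⁴). Then (α² + δ)/β = a + b. -/

import Mathlib

/-! With `α² = s'²a² = ab(a + 2b)/(2a + b)`, the radicand `α⁴ - α²β² + β⁴` is the perfect square
`(β(a + b) - α²)²`, and `β(a + b) - α² ≥ 0`; hence `δ = β(a + b) - α²` and the quotient collapses. -/

theorem div_add_sqrt_eq_of_sq_mul {α β c : ℝ} (hβ : 0 < β) (hle : α ^ 2 ≤ β * c)
    (hrel : α ^ 2 * (2 * c - β) = β * (c ^ 2 - β ^ 2)) :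
    (α ^ 2 + Real.sqrt (α ^ 4 - α ^ 2 * β ^ 2 + β ^ 4)) / β = c := by
  have hsq : α ^ 4 - α ^ 2 * β ^ 2 + β ^ 4 = (β * c - α ^ 2) ^ 2 := by
    linear_combination β * hrel
  rw [hsq, Real.sqrt_sq (sub_nonneg.mpr hle)]
  field_simp
  ring

theorem sq_mul_sqrt_ratio_mul {a b : ℝ} (ha : 0 < a) (hb : 0 ≤ b) :
    (Real.sqrt ((2 * b ^ 2 + a * b) / (2 * a ^ 2 + a * b)) * a) ^ 2 * (2 * a + b)
      = a * b * (a + 2 * b) := by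
  rw [mul_pow, Real.sq_sqrt (by positivity)]
  field_simp
  ring

theorem excentral_circumradius (a b : ℝ) (hb : 0 < b) (hab : b < a)
    (s' α β δ : ℝ)
    (hs' : s' = Real.sqrt ((2 * b ^ 2 + a * b) / (2 * a ^ 2 + a * b)))
    (hα : α = s' * a) (hβ : β = b)
    (hδ : δ = Real.sqrt (α ^ 4 - α ^ 2 * β ^ 2 + β ^ 4)) :
    (α ^ 2 + δ) / β = a + b := by
  have ha : 0 < a := hb.trans hab
  have hrel := sq_mul_sqrt_ratio_mul ha hb.le
  rw [hδ, hβ, hα, hs']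
  apply div_add_sqrt_eq_of_sq_mul hb
  · -- `b(a + b)(2a + b) - ab(a + 2b) = b(a² + ab + b²)`
    refine le_of_mul_le_mul_right ?_ (by positivity : 0 < 2 * a + b)
    nlinarith [mul_pos ha hb]
  · linear_combination hrel
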